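/- Let g ∈ (0,π), t ∈ ℝ, t ∉ ℤ, with g·t ∈ 2πℤ, and define for nonzero integers k: a_k(t) = (1/2π)(∫_{-g}^{g} e^{iω(t-k)} dω + ∫_{|ω|∈[g,π]} e^{-iωk} dω). Then a_k(t) = (1/π)·sin(g k)·t/(k(k - t)). -/

import Mathlib

/-!
On `[-g, g]` the integral of `e^{iω(t-k)}` is `2 sin (g(t-k)) / (t-k)`, and `g t ∈ 2πℤ` turns
`sin (g(t-k))` into `-sin (g k)`. The integral of `e^{-iωk}` over the complementary band is the
integral over a full period, which vanishes for `k ≠ 0`, minus the one over `[-g, g]`, i.e.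
`-2 sin (g k) / k`. Adding the two gives `2 sin (g k) t / (k (k - t))`.
-/

open Complex intervalIntegral

lemma integral_cexp_I_mul_symm (a : ℝ) {c : ℝ} (hc : c ≠ 0) :
    ∫ x in (-a)..a, cexp (I * x * c) = ((2 * Real.sin (a * c) / c : ℝ) : ℂ) := by
  have hIc : I * c ≠ 0 := mul_ne_zero I_ne_zero (ofReal_ne_zero.2 hc)
  simp_rw [mul_right_comm I]
  rw [integral_exp_mul_complex hIc]
  have hupper : I * c * a = (a * c : ℝ) * I := by push_cast; ring
  have hlower : I * c * ((-a : ℝ) : ℂ) = -((a * c : ℝ) : ℂ) * I := by push_cast; ring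
  rw [hupper, hlower, exp_mul_I, exp_mul_I, cos_neg, sin_neg]
  push_cast
  field_simp
  ring

lemma integral_cexp_I_mul_int_eq_zero {k : ℤ} (hk : k ≠ 0) :
    ∫ x in (-Real.pi)..Real.pi, cexp (I * x * (k : ℝ)) = 0 := by
  rw [integral_cexp_I_mul_symm Real.pi (Int.cast_ne_zero.2 hk), mul_comm Real.pi,
    Real.sin_int_mul_pi]
  simp

lemma integral_add_integral_eq_sub_integral {f : ℝ → ℂ} (hf : Continuous f) (a b : ℝ) :
    (∫ x in (-a)..(-b), f x) + ∫ x in b..a, f x =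
      (∫ x in (-a)..a, f x) - ∫ x in (-b)..b, f x := by
  rw [integral_interval_add_interval_comm (hf.intervalIntegrable _ _) (hf.intervalIntegrable _ _)
    (hf.intervalIntegrable _ _), integral_symm (-b) b, sub_eq_add_neg]

lemma Real.sin_mul_sub_of_mul_eq_two_pi_mul {g t : ℝ} {n : ℤ} (h : g * t = 2 * Real.pi * n)
    (x : ℝ) : Real.sin (g * (t - x)) = -Real.sin (g * x) := by
  rw [mul_sub, h, mul_comm (2 * Real.pi)]
  exact Real.sin_int_mul_two_pi_sub _ n

theorem stmt6_general (g t : ℝ)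
    (hgt : ∃ n : ℤ, g * t = 2 * Real.pi * n) (k : ℤ) (hk : k ≠ 0) (hkt : (k:ℝ) ≠ t) :
    ((1 / (2 * Real.pi) : ℝ) : ℂ) *
      ((∫ ω in (-g)..g, Complex.exp (Complex.I * ω * (t - k))) +
        ((∫ ω in (-Real.pi)..(-g), Complex.exp (-Complex.I * ω * k)) +
          (∫ ω in g..Real.pi, Complex.exp (-Complex.I * ω * k)))) =
      (((1 / Real.pi) * Real.sin (g * k) * t / (k * ((k:ℝ) - t)) : ℝ) : ℂ) := by
  obtain ⟨n, hn⟩ := hgt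
  have hband : ∫ ω in (-g)..g, cexp (I * ω * (t - k)) =
      ((2 * Real.sin (g * (t - k)) / (t - k) : ℝ) : ℂ) := by
    rw [← integral_cexp_I_mul_symm g (sub_ne_zero.2 hkt.symm)]
    push_cast
    rfl
  have hrest : (∫ ω in (-Real.pi)..(-g), cexp (-I * ω * k)) + ∫ ω in g..Real.pi, cexp (-I * ω * k)
      = ((2 * Real.sin (g * k) / -k : ℝ) : ℂ) := by
    have hmk : -k ≠ 0 := neg_ne_zero.2 hk
    have hint : ∀ ω : ℝ, -I * ω * k = I * ω * ((-k : ℤ) : ℝ) := fun ω => by push_cast; ring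
    simp_rw [hint]
    rw [integral_add_integral_eq_sub_integral (by fun_prop),
      integral_cexp_I_mul_int_eq_zero hmk, integral_cexp_I_mul_symm g (Int.cast_ne_zero.2 hmk),
      Int.cast_neg, mul_neg, Real.sin_neg]
    push_cast
    ring
  rw [hband, hrest, Real.sin_mul_sub_of_mul_eq_two_pi_mul hn]
  have hkR : (k : ℝ) ≠ 0 := Int.cast_ne_zero.2 hk
  have htk : t - k ≠ 0 := sub_ne_zero.2 hkt.symm
  have hkt' : (k : ℝ) - t ≠ 0 := sub_ne_zero.2 hkt
  suffices 1 / (2 * Real.pi) * (2 * -Real.sin (g * k) / (t - k) + 2 * Real.sin (g * k) / -k) =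
      1 / Real.pi * Real.sin (g * k) * t / (k * (k - t)) by exact_mod_cast this
  field_simp
  ring

theorem stmt6 (g t : ℝ) (hg : g ∈ Set.Ioo 0 Real.pi) (ht : ∀ n : ℤ, t ≠ (n : ℝ))
    (hgt : ∃ n : ℤ, g * t = 2 * Real.pi * n) (k : ℤ) (hk : k ≠ 0) (hkt : (k:ℝ) ≠ t) :
    ((1 / (2 * Real.pi) : ℝ) : ℂ) *
      ((∫ ω in (-g)..g, Complex.exp (Complex.I * ω * (t - k))) +
        ((∫ ω in (-Real.pi)..(-g), Complex.exp (-Complex.I * ω * k)) +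
          (∫ ω in g..Real.pi, Complex.exp (-Complex.I * ω * k)))) =
      (((1 / Real.pi) * Real.sin (g * k) * t / (k * ((k:ℝ) - t)) : ℝ) : ℂ) :=
  stmt6_general g t hgt k hk hkt
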